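/- Let m ≥ 1 be an integer. There exist real constants a₀, …, a_m such that for every f ∈ Z^{m,1}(ℝ) and every bounded interval I ⊆ ℝ there exist C > 0 and h₀ > 0 with | h f′(x) − Σ_{j=0}^m a_j D_m(f)(x; j h) | ≤ C |h|^{m+1} for all x ∈ I and 0 < |h| ≤ h₀, where D_m(f)(x;h) := (1/2^m) f(x + 2h) − 2 f(x + h). -/

import Mathlib

/-- The local Zygmund class `Z^{m,1}(ℝ)`: `C^m` functions whose `m`-th derivative satisfies a
Zygmund (second difference) estimate on every compact set. -/
def ZygmundClassR (m : ℕ) (f : ℝ → ℝ) : Prop :=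
  ContDiff ℝ m f ∧
    ∀ K : Set ℝ, IsCompact K →
      ∃ C : ℝ, ∀ x h : ℝ, x ∈ K → x + h ∈ K → x - h ∈ K → h ≠ 0 →
        |iteratedDeriv m f (x + h) - 2 * iteratedDeriv m f x + iteratedDeriv m f (x - h)|
          ≤ C * |h|

/-- `D_m(f)(x;h) := 2^{-m} f(x+2h) - 2 f(x+h)`. -/
noncomputable def Dm (m : ℕ) (f : ℝ → ℝ) (x h : ℝ) : ℝ :=
  (1 / 2 ^ m) * f (x + 2 * h) - 2 * f (x + h)


section ZygmundAux

open MeasureTheory intervalIntegral Finset Matrix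

private lemma taylor_int (n : ℕ) (hn : 1 ≤ n) : ∀ (f : ℝ → ℝ), ContDiff ℝ n f → ∀ x t : ℝ,
    f (x + t) = (∑ p ∈ Finset.range n, iteratedDeriv p f x * t ^ p / p.factorial)
      + ∫ s in (0:ℝ)..t, (t - s) ^ (n - 1) / (n - 1).factorial * iteratedDeriv n f (x + s) := by
  induction n, hn using Nat.le_induction with
  | base =>
    intro f hf x t
    have hint : ∫ s in (0:ℝ)..t, iteratedDeriv 1 f (x + s) = f (x + t) - f (x + 0) := by
      apply intervalIntegral.integral_eq_sub_of_hasDerivAt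
      · intro s _
        have h1 : HasDerivAt f (deriv f (x + s)) (x + s) :=
          ((hf.differentiable one_ne_zero) (x + s)).hasDerivAt
        have := h1.comp_const_add x s
        simpa [iteratedDeriv_one] using this
      · exact ((hf.continuous_iteratedDeriv 1 le_rfl).comp
          (continuous_const.add continuous_id)).intervalIntegrable _ _
    simp only [Finset.range_one, Finset.sum_singleton, iteratedDeriv_zero, pow_zero,
      Nat.factorial_zero, Nat.sub_self, Nat.cast_one, div_one, mul_one, one_div, inv_one,
      one_mul, add_zero] at *
    rw [hint]; ring
  | succ n hn IH =>
    obtain ⟨k, rfl⟩ : ∃ k, n = k + 1 := ⟨n - 1, (Nat.succ_pred_eq_of_pos hn).symm⟩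
    intro f hf x t
    have hf' : ContDiff ℝ (k+1) f := hf.of_le (by exact_mod_cast Nat.le_succ (k+1))
    have hg : Continuous (iteratedDeriv (k+1) f) :=
      hf.continuous_iteratedDeriv (k+1) (by exact_mod_cast Nat.le_succ (k+1))
    have hg' : Continuous (iteratedDeriv (k+1+1) f) := by
      exact hf.continuous_iteratedDeriv (k+1+1) (by exact_mod_cast le_rfl)
    have hu : ∀ s ∈ Set.uIcc (0:ℝ) t,
        HasDerivAt (fun s => iteratedDeriv (k+1) f (x + s)) (iteratedDeriv (k+1+1) f (x + s)) s := by
      intro s _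
      have hd : Differentiable ℝ (iteratedDeriv (k+1) f) :=
        hf.differentiable_iteratedDeriv (k+1) (by exact_mod_cast Nat.lt_succ_self (k+1))
      have h1 := (hd (x + s)).hasDerivAt
      rw [← iteratedDeriv_succ] at h1
      exact h1.comp_const_add x s
    have hv : ∀ s ∈ Set.uIcc (0:ℝ) t,
        HasDerivAt (fun s => -((t - s) ^ (k+1) / (k+1).factorial))
          ((t - s) ^ k / k.factorial) s := by
      intro s _
      have h1 : HasDerivAt (fun s : ℝ => t - s) (-1) s := by
        simpa using (hasDerivAt_id s).const_sub t
      have h2 := ((h1.pow (k+1)).div_const ((k+1).factorial : ℝ)).neg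
      convert h2 using 1
      · rfl
      · rfl
      · rfl
      have hfn : (k.factorial : ℝ) ≠ 0 := Nat.cast_ne_zero.mpr k.factorial_ne_zero
      simp only [Nat.add_sub_cancel, Nat.factorial_succ, Nat.cast_mul, Nat.cast_add, Nat.cast_one]
      field_simp
    have ibp := intervalIntegral.integral_mul_deriv_eq_deriv_mul
      (u := fun s => iteratedDeriv (k+1) f (x + s))
      (u' := fun s => iteratedDeriv (k+1+1) f (x + s))
      (v := fun s => -((t - s) ^ (k+1) / (k+1).factorial))
      (v' := fun s => (t - s) ^ k / k.factorial)
      hu hv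
      ((hg'.comp (continuous_const.add continuous_id)).intervalIntegrable _ _)
      ((((continuous_const.sub continuous_id).pow k).div_const _).intervalIntegrable _ _)
    have key : (∫ s in (0:ℝ)..t, (t - s) ^ k / k.factorial * iteratedDeriv (k+1) f (x + s))
        = iteratedDeriv (k+1) f x * t ^ (k+1) / (k+1).factorial
          + ∫ s in (0:ℝ)..t, (t - s) ^ (k+1) / (k+1).factorial * iteratedDeriv (k+1+1) f (x + s) := by
      have comm1 : (∫ s in (0:ℝ)..t, (t - s) ^ k / k.factorial * iteratedDeriv (k+1) f (x + s))
          = ∫ s in (0:ℝ)..t, iteratedDeriv (k+1) f (x + s) * ((t - s) ^ k / k.factorial) := by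
        apply intervalIntegral.integral_congr; intro s _; ring
      rw [comm1, ibp]
      have e1 : (fun s => iteratedDeriv (k+1+1) f (x + s) * -((t - s) ^ (k+1) / (k+1).factorial))
          = fun s => -((t - s) ^ (k+1) / (k+1).factorial * iteratedDeriv (k+1+1) f (x + s)) := by
        funext s; ring
      rw [e1, intervalIntegral.integral_neg]
      simp only [sub_self, zero_pow (Nat.succ_ne_zero k), zero_div, neg_zero, mul_zero,
        sub_zero, add_zero]
      ring
    rw [IH f hf' x t]
    simp only [Nat.add_sub_cancel] at *
    conv_rhs => rw [Finset.sum_range_succ]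
    rw [key]
    ring

private lemma exists_coeffs (m : ℕ) (b : ℕ → ℝ) :
    ∃ a : ℕ → ℝ, ∀ p ≤ m, ∑ j ∈ Finset.range (m + 1), a j * (j : ℝ) ^ p = b p := by
  set v : Fin (m + 1) → ℝ := fun j => (j : ℝ) with hv
  have hinj : Function.Injective v := fun i j hij => by
    have : ((i : ℕ) : ℝ) = ((j : ℕ) : ℝ) := hij
    exact Fin.ext (Nat.cast_injective this)
  set M : Matrix (Fin (m+1)) (Fin (m+1)) ℝ := (Matrix.vandermonde v)ᵀ with hM
  have hdet : M.det ≠ 0 := by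
    rw [hM, Matrix.det_transpose]
    exact Matrix.det_vandermonde_ne_zero_iff.mpr hinj
  set a' : Fin (m+1) → ℝ := M⁻¹.mulVec (fun p : Fin (m+1) => b p) with ha'
  have hsolve : M.mulVec a' = fun p : Fin (m+1) => b (p : ℕ) := by
    rw [ha', Matrix.mulVec_mulVec, Matrix.mul_nonsing_inv _ (Ne.isUnit hdet), Matrix.one_mulVec]
  refine ⟨fun j => if hj : j < m + 1 then a' ⟨j, hj⟩ else 0, fun p hp => ?_⟩
  have hp' : p < m + 1 := Nat.lt_succ_of_le hp
  have := congrFun hsolve ⟨p, hp'⟩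
  rw [Matrix.mulVec] at this
  simp only [dotProduct] at this
  rw [Finset.sum_range fun j => (if hj : j < m + 1 then a' ⟨j, hj⟩ else 0) * (j : ℝ) ^ p]
  rw [← this]
  apply Finset.sum_congr rfl
  intro j _
  simp only [Fin.is_lt, dif_pos, hM, Matrix.transpose_apply, Matrix.vandermonde_apply]
  rw [mul_comm]

private lemma mem_uIoc_abs {t s : ℝ} (hs : s ∈ Set.uIoc 0 t) : |s| ≤ |t| ∧ |t - s| ≤ |t| := by
  rcases le_total 0 t with h | h
  · rw [Set.uIoc_of_le h] at hs
    obtain ⟨h1, h2⟩ := hs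
    rw [abs_of_nonneg h, abs_of_nonneg h1.le, abs_of_nonneg (by linarith)]
    constructor <;> linarith
  · rw [Set.uIoc_of_ge h] at hs
    obtain ⟨h1, h2⟩ := hs
    rw [abs_of_nonpos h, abs_of_nonpos h2, abs_of_nonpos (by linarith : t - s ≤ 0)]
    constructor <;> linarith


private lemma key_est (m : ℕ) (hm : 1 ≤ m) (f : ℝ → ℝ) (hCD : ContDiff ℝ m f)
    (x t : ℝ) (C₁ : ℝ) (hC₁ : 0 ≤ C₁)
    (hΔ : ∀ s : ℝ, |s| ≤ |t| →
      |iteratedDeriv m f (x + 2*s) - 2 * iteratedDeriv m f (x + s) + iteratedDeriv m f x|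
        ≤ C₁ * |s|) :
    |Dm m f x t - ∑ p ∈ Finset.range (m+1),
        ((2:ℝ)^p / 2^m - 2) * (iteratedDeriv p f x * t^p / p.factorial)|
      ≤ (C₁ / (m-1).factorial) * |t|^(m+1) := by
  set c : ℝ := ((m-1).factorial : ℝ) with hc
  have hc0 : (0:ℝ) < c := by rw [hc]; exact_mod_cast (m-1).factorial_pos
  have hgc : Continuous (iteratedDeriv m f) := hCD.continuous_iteratedDeriv m le_rfl
  have h2m : (0:ℝ) < 2^m := by positivity
  set S1 : ℝ := ∑ p ∈ Finset.range m, iteratedDeriv p f x * t ^ p / p.factorial with hS1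
  set S2 : ℝ := ∑ p ∈ Finset.range m, iteratedDeriv p f x * (2*t) ^ p / p.factorial with hS2
  set Sp : ℝ := ∑ p ∈ Finset.range m,
      ((2:ℝ)^p / 2^m - 2) * (iteratedDeriv p f x * t^p / p.factorial) with hSp
  set J1 : ℝ := ∫ s in (0:ℝ)..t, (t - s) ^ (m-1) / c * iteratedDeriv m f (x + s) with hJ1
  set J2 : ℝ := ∫ s in (0:ℝ)..(2*t), (2*t - s) ^ (m-1) / c * iteratedDeriv m f (x + s) with hJ2
  set J2' : ℝ := ∫ s in (0:ℝ)..t, (t - s) ^ (m-1) / c * iteratedDeriv m f (x + 2*s) with hJ2'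
  have hA : f (x + t) = S1 + J1 := taylor_int m hm f hCD x t
  have hB : f (x + 2*t) = S2 + J2 := taylor_int m hm f hCD x (2*t)
  have h2 : (2:ℝ) * 2^(m-1) = 2^m := by
    rw [← pow_succ']
    congr 1
    omega
  -- substitution: (1/2^m) * J2 = J2'
  have hC : (1 / (2:ℝ)^m) * J2 = J2' := by
    have hsub := intervalIntegral.integral_comp_mul_left
      (fun u => (2*t - u) ^ (m-1) / c * iteratedDeriv m f (x + u)) (two_ne_zero (α := ℝ))
      (a := 0) (b := t)
    simp only [mul_zero, smul_eq_mul] at hsub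
    have e2 : ∀ s : ℝ, (2*t - 2*s) ^ (m-1) / c * iteratedDeriv m f (x + 2*s)
        = 2^(m-1) * ((t - s) ^ (m-1) / c * iteratedDeriv m f (x + 2*s)) := by
      intro s
      rw [show 2*t - 2*s = 2*(t-s) by ring, mul_pow]
      ring
    have hsub2 : (∫ s in (0:ℝ)..t, (2*t - 2*s) ^ (m-1) / c * iteratedDeriv m f (x + 2*s))
        = 2^(m-1) * J2' := by
      rw [hJ2', ← intervalIntegral.integral_const_mul]
      exact intervalIntegral.integral_congr fun s _ => e2 s
    rw [hsub2, ← hJ2] at hsub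
    have hkey : (2:ℝ)^m * J2' = J2 := by
      rw [← h2, mul_assoc, hsub]
      ring
    rw [← hkey]
    field_simp
  -- kernel integral
  have hD : (∫ s in (0:ℝ)..t, (t - s) ^ (m-1) / c) = t^m / (m.factorial : ℝ) := by
    have h1 : (∫ s in (0:ℝ)..t, (t - s) ^ (m-1))
        = ∫ u in (t - t)..(t - 0), u ^ (m-1) :=
      intervalIntegral.integral_comp_sub_left (fun u => u ^ (m-1)) t
    have h2' : (∫ u in (t - t)..(t - 0), u ^ (m-1)) = t^m / (((m-1) + 1 : ℕ) : ℝ) := by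
      rw [sub_self, sub_zero, integral_pow]
      norm_num
      congr 2
      omega
    have h3 : (m - 1 + 1) * (m-1).factorial = m.factorial := by
      rw [show m - 1 + 1 = m from by omega]
      exact Nat.mul_factorial_pred (by omega)
    have hfac : ((m.factorial : ℝ)) = (((m-1) + 1 : ℕ) : ℝ) * c := by
      rw [hc, ← h3]
      push_cast
      ring
    have hsplit : (∫ s in (0:ℝ)..t, (t - s) ^ (m-1) / c)
        = (∫ s in (0:ℝ)..t, (t - s) ^ (m-1)) / c := by
      simp_rw [div_eq_mul_inv]
      rw [intervalIntegral.integral_mul_const]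
    rw [hsplit, h1, h2', hfac]
    have hne : (((m-1) + 1 : ℕ) : ℝ) ≠ 0 := by positivity
    field_simp
  -- linearity
  have hE : (∫ s in (0:ℝ)..t, (t - s) ^ (m-1) / c *
        (iteratedDeriv m f (x + 2*s) - 2 * iteratedDeriv m f (x + s) + iteratedDeriv m f x))
      = J2' - 2 * J1 + iteratedDeriv m f x * (t^m / (m.factorial : ℝ)) := by
    have i1 : IntervalIntegrable (fun s => (t - s) ^ (m-1) / c * iteratedDeriv m f (x + 2*s))
        volume 0 t :=
      (((continuous_const.sub continuous_id).pow _).div_const _ |>.mul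
        (hgc.comp (continuous_const.add (continuous_const.mul continuous_id)))).intervalIntegrable _ _
    have i2 : IntervalIntegrable (fun s => (t - s) ^ (m-1) / c * iteratedDeriv m f (x + s))
        volume 0 t :=
      (((continuous_const.sub continuous_id).pow _).div_const _ |>.mul
        (hgc.comp (continuous_const.add continuous_id))).intervalIntegrable _ _
    have i3 : IntervalIntegrable (fun s => (t - s) ^ (m-1) / c) volume 0 t :=
      (((continuous_const.sub continuous_id).pow _).div_const _).intervalIntegrable _ _
    have expand : ∀ s : ℝ, (t - s) ^ (m-1) / c *
          (iteratedDeriv m f (x + 2*s) - 2 * iteratedDeriv m f (x + s) + iteratedDeriv m f x)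
        = ((t - s) ^ (m-1) / c * iteratedDeriv m f (x + 2*s)
            - 2 * ((t - s) ^ (m-1) / c * iteratedDeriv m f (x + s)))
          + iteratedDeriv m f x * ((t - s) ^ (m-1) / c) := by intro s; ring
    rw [intervalIntegral.integral_congr (fun s _ => expand s)]
    rw [intervalIntegral.integral_add (i1.sub (i2.const_mul 2)) (i3.const_mul _),
      intervalIntegral.integral_sub i1 (i2.const_mul 2),
      intervalIntegral.integral_const_mul, intervalIntegral.integral_const_mul, hD]
  -- sum identities
  have hF : (1 / (2:ℝ)^m) * S2 - 2 * S1 = Sp := by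
    rw [hS1, hS2, hSp, Finset.mul_sum, Finset.mul_sum, ← Finset.sum_sub_distrib]
    apply Finset.sum_congr rfl
    intro p _
    rw [mul_pow]
    field_simp
  have hG : (∑ p ∈ Finset.range (m+1),
        ((2:ℝ)^p / 2^m - 2) * (iteratedDeriv p f x * t^p / p.factorial))
      = Sp - iteratedDeriv m f x * t^m / m.factorial := by
    rw [Finset.sum_range_succ]
    have hone : ((2:ℝ)^m / 2^m - 2) = -1 := by
      rw [div_self (ne_of_gt h2m)]
      norm_num
    rw [hone]
    ring
  have hmain : Dm m f x t - ∑ p ∈ Finset.range (m+1),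
        ((2:ℝ)^p / 2^m - 2) * (iteratedDeriv p f x * t^p / p.factorial)
      = ∫ s in (0:ℝ)..t, (t - s) ^ (m-1) / c *
          (iteratedDeriv m f (x + 2*s) - 2 * iteratedDeriv m f (x + s) + iteratedDeriv m f x) := by
    rw [hG, hE]
    unfold Dm
    linear_combination (1/(2:ℝ)^m) * hB - 2 * hA + hC + hF
  rw [hmain]
  have hb : ∀ s ∈ Set.uIoc (0:ℝ) t,
      ‖(t - s) ^ (m-1) / c *
        (iteratedDeriv m f (x + 2*s) - 2 * iteratedDeriv m f (x + s) + iteratedDeriv m f x)‖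
      ≤ |t|^(m-1) / c * (C₁ * |t|) := by
    intro s hs
    obtain ⟨hs1, hs2⟩ := mem_uIoc_abs hs
    rw [Real.norm_eq_abs, abs_mul, abs_div, abs_pow, abs_of_pos hc0]
    apply mul_le_mul
    · gcongr
    · exact (hΔ s hs1).trans (mul_le_mul_of_nonneg_left hs1 hC₁)
    · exact abs_nonneg _
    · positivity
  have hnorm := intervalIntegral.norm_integral_le_of_norm_le_const hb
  rw [Real.norm_eq_abs] at hnorm
  refine le_trans hnorm ?_
  rw [sub_zero]
  have hpow : |t|^(m-1) * |t| * |t| = |t|^(m+1) := by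
    rw [← pow_succ, ← pow_succ]
    congr 1
    omega
  have heq : |t|^(m-1) / c * (C₁ * |t|) * |t| = (C₁ / c) * |t|^(m+1) := by
    rw [← hpow]; ring
  rw [heq]

end ZygmundAux

/-- **Lemma 3.8.** For `m ≥ 1` there are constants `a₀, …, a_m` such that for every
`f ∈ Z^{m,1}(ℝ)` and every bounded interval `I`,
`h f'(x) - ∑_{j=0}^m a_j D_m(f)(x; jh) = O(|h|^{m+1})` uniformly for `x ∈ I`. -/
theorem zygmund_first_derivative_approx (m : ℕ) (hm : 1 ≤ m) :
    ∃ a : ℕ → ℝ, ∀ f : ℝ → ℝ, ZygmundClassR m f →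
      ∀ I : Set ℝ, Bornology.IsBounded I →
        ∃ C > (0 : ℝ), ∃ h₀ > (0 : ℝ), ∀ x ∈ I, ∀ h : ℝ, 0 < |h| → |h| ≤ h₀ →
          |h * deriv f x - ∑ j ∈ Finset.range (m + 1), a j * Dm m f x (j * h)|
            ≤ C * |h| ^ (m + 1) := by
  have h2m : (0:ℝ) < 2^m := by positivity
  have hw1 : ((2:ℝ)/2^m - 2) ≠ 0 := by
    have h1 : (2:ℝ)/2^m ≤ 1 := by
      rw [div_le_one h2m]
      calc (2:ℝ) = 2^1 := (pow_one 2).symm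
        _ ≤ 2^m := pow_le_pow_right₀ one_le_two hm
    intro hcon
    rw [sub_eq_zero] at hcon
    linarith
  obtain ⟨a, ha⟩ := exists_coeffs m (fun p => if p = 1 then 1 / ((2:ℝ)/2^m - 2) else 0)
  refine ⟨a, ?_⟩
  intro f hZ I hI
  obtain ⟨hCD, hZy⟩ := hZ
  obtain ⟨R, hR⟩ := hI.subset_closedBall 0
  set R' : ℝ := max R 0 + 2*m + 1 with hR'
  obtain ⟨C₀, hC₀⟩ := hZy (Set.Icc (-R') R') isCompact_Icc
  set C₁ : ℝ := max C₀ 0 with hC₁d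
  have hC₁ : 0 ≤ C₁ := le_max_right _ _
  set c : ℝ := ((m-1).factorial : ℝ) with hcdef
  have hc0 : (0:ℝ) < c := by rw [hcdef]; exact_mod_cast (m-1).factorial_pos
  set A : ℝ := ∑ j ∈ Finset.range (m+1), |a j| with hAdef
  have hA0 : 0 ≤ A := Finset.sum_nonneg fun j _ => abs_nonneg _
  have hmem : ∀ x ∈ I, ∀ u : ℝ, |u| ≤ 2*m + 1 → x + u ∈ Set.Icc (-R') R' := by
    intro x hx u hu
    have hxR : |x| ≤ max R 0 := by
      have h1 := hR hx
      rw [Metric.mem_closedBall, Real.dist_eq, sub_zero] at h1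
      exact h1.trans (le_max_left _ _)
    rw [Set.mem_Icc, hR']
    have h1 := abs_le.mp hxR
    have h2 := abs_le.mp hu
    constructor <;> linarith
  have hΔ : ∀ x ∈ I, ∀ s : ℝ, |s| ≤ (m:ℝ) →
      |iteratedDeriv m f (x + 2*s) - 2 * iteratedDeriv m f (x + s) + iteratedDeriv m f x|
        ≤ C₁ * |s| := by
    intro x hx s hs
    rcases eq_or_ne s 0 with rfl | hs0
    · simp only [mul_zero, add_zero, abs_zero, mul_zero]
      rw [show iteratedDeriv m f x - 2 * iteratedDeriv m f x + iteratedDeriv m f x = 0 by ring]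
      simp
    · have hmcast : (0:ℝ) ≤ (m:ℝ) := Nat.cast_nonneg m
      have habs := abs_le.mp hs
      have hm1 : x + s ∈ Set.Icc (-R') R' := hmem x hx s (by linarith)
      have hm2 : (x + s) + s ∈ Set.Icc (-R') R' := by
        rw [show x + s + s = x + (2*s) by ring]
        refine hmem x hx (2*s) ?_
        rw [abs_mul, abs_two]
        linarith
      have hm3 : (x + s) - s ∈ Set.Icc (-R') R' := by
        rw [show x + s - s = x + 0 by ring]
        refine hmem x hx 0 ?_
        rw [abs_zero]
        linarith
      have hb := hC₀ (x + s) s hm1 hm2 hm3 hs0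
      rw [show x + s + s = x + 2*s by ring, show x + s - s = x by ring] at hb
      exact hb.trans (mul_le_mul_of_nonneg_right (le_max_left _ _) (abs_nonneg _))
  -- choose constants
  refine ⟨A * (C₁ / c) * (m:ℝ)^(m+1) + 1, by
      have h1 : 0 ≤ A * (C₁ / c) * (m:ℝ)^(m+1) :=
        mul_nonneg (mul_nonneg hA0 (div_nonneg hC₁ hc0.le)) (by positivity)
      linarith, 1, one_pos, ?_⟩
  intro x hx h hpos hle
  -- per-j estimate
  have hEj : ∀ j ∈ Finset.range (m+1),
      |Dm m f x ((j:ℝ)*h) - ∑ p ∈ Finset.range (m+1),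
        ((2:ℝ)^p/2^m - 2) * (iteratedDeriv p f x * ((j:ℝ)*h)^p / p.factorial)|
      ≤ (C₁/c) * ((m:ℝ)^(m+1) * |h|^(m+1)) := by
    intro j hj
    have hjm : (j:ℝ) ≤ (m:ℝ) := by
      exact_mod_cast Nat.lt_succ_iff.mp (Finset.mem_range.mp hj)
    have hj0 : (0:ℝ) ≤ (j:ℝ) := Nat.cast_nonneg j
    have htm : |(j:ℝ)*h| ≤ (m:ℝ) := by
      rw [abs_mul, abs_of_nonneg hj0]
      calc (j:ℝ) * |h| ≤ (m:ℝ) * 1 := mul_le_mul hjm hle (abs_nonneg _) (Nat.cast_nonneg m)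
        _ = (m:ℝ) := mul_one _
    have hk := key_est m hm f hCD x ((j:ℝ)*h) C₁ hC₁
      (fun s hs => hΔ x hx s (hs.trans htm))
    refine hk.trans ?_
    rw [hcdef] at *
    apply mul_le_mul_of_nonneg_left ?_ (div_nonneg hC₁ hc0.le)
    rw [abs_mul, abs_of_nonneg hj0, ← mul_pow]
    exact pow_le_pow_left₀ (mul_nonneg hj0 (abs_nonneg _))
      (mul_le_mul_of_nonneg_right hjm (abs_nonneg _)) _
  -- the main sum computation
  have hswap : (∑ j ∈ Finset.range (m+1), a j * (∑ p ∈ Finset.range (m+1),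
        ((2:ℝ)^p/2^m - 2) * (iteratedDeriv p f x * ((j:ℝ)*h)^p / p.factorial)))
      = h * deriv f x := by
    have step1 : ∀ j : ℕ, a j * (∑ p ∈ Finset.range (m+1),
          ((2:ℝ)^p/2^m - 2) * (iteratedDeriv p f x * ((j:ℝ)*h)^p / p.factorial))
        = ∑ p ∈ Finset.range (m+1),
            (((2:ℝ)^p/2^m - 2) * (iteratedDeriv p f x * h^p / p.factorial))
              * (a j * (j:ℝ)^p) := by
      intro j
      rw [Finset.mul_sum]
      apply Finset.sum_congr rfl
      intro p _
      rw [mul_pow]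
      ring
    rw [Finset.sum_congr rfl (fun j _ => step1 j), Finset.sum_comm]
    have step2 : ∀ p ∈ Finset.range (m+1),
        (∑ j ∈ Finset.range (m+1),
          (((2:ℝ)^p/2^m - 2) * (iteratedDeriv p f x * h^p / p.factorial)) * (a j * (j:ℝ)^p))
        = (((2:ℝ)^p/2^m - 2) * (iteratedDeriv p f x * h^p / p.factorial))
            * (if p = 1 then 1 / ((2:ℝ)/2^m - 2) else 0) := by
      intro p hp
      rw [← Finset.mul_sum, ha p (Nat.lt_succ_iff.mp (Finset.mem_range.mp hp))]
    rw [Finset.sum_congr rfl step2]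
    rw [Finset.sum_eq_single_of_mem 1 (Finset.mem_range.mpr (by omega))
      (fun p _ hne => by rw [if_neg hne, mul_zero])]
    rw [if_pos rfl, iteratedDeriv_one, pow_one, Nat.factorial_one]
    have hcancel : ((2:ℝ)/2^m - 2) * (1/((2:ℝ)/2^m - 2)) = 1 := mul_one_div_cancel hw1
    linear_combination (deriv f x * h) * hcancel
  have hsplit : h * deriv f x - ∑ j ∈ Finset.range (m+1), a j * Dm m f x ((j:ℝ) * h)
      = - ∑ j ∈ Finset.range (m+1), a j * (Dm m f x ((j:ℝ)*h) - ∑ p ∈ Finset.range (m+1),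
          ((2:ℝ)^p/2^m - 2) * (iteratedDeriv p f x * ((j:ℝ)*h)^p / p.factorial)) := by
    have expand : ∀ j ∈ Finset.range (m+1), a j * Dm m f x ((j:ℝ)*h)
        = a j * (Dm m f x ((j:ℝ)*h) - ∑ p ∈ Finset.range (m+1),
            ((2:ℝ)^p/2^m - 2) * (iteratedDeriv p f x * ((j:ℝ)*h)^p / p.factorial))
          + a j * (∑ p ∈ Finset.range (m+1),
            ((2:ℝ)^p/2^m - 2) * (iteratedDeriv p f x * ((j:ℝ)*h)^p / p.factorial)) := by
      intro j _
      ring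
    rw [Finset.sum_congr rfl expand, Finset.sum_add_distrib, hswap]
    ring
  rw [hsplit, abs_neg]
  refine (Finset.abs_sum_le_sum_abs _ _).trans ?_
  have hbd : (∑ j ∈ Finset.range (m+1), |a j * (Dm m f x ((j:ℝ)*h) - ∑ p ∈ Finset.range (m+1),
        ((2:ℝ)^p/2^m - 2) * (iteratedDeriv p f x * ((j:ℝ)*h)^p / p.factorial))|)
      ≤ ∑ j ∈ Finset.range (m+1), |a j| * ((C₁/c) * ((m:ℝ)^(m+1) * |h|^(m+1))) := by
    apply Finset.sum_le_sum
    intro j hj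
    rw [abs_mul]
    exact mul_le_mul_of_nonneg_left (hEj j hj) (abs_nonneg _)
  refine hbd.trans ?_
  rw [← Finset.sum_mul, ← hAdef]
  have hpow : (0:ℝ) ≤ |h|^(m+1) := by positivity
  nlinarith [mul_nonneg (mul_nonneg hA0 (div_nonneg hC₁ hc0.le)) (mul_nonneg (pow_nonneg (Nat.cast_nonneg m) (m+1)) hpow)]
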